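/- arXiv:1910.05768 — 4 statements merged into one kernel-verified Lean document; each statement's English description precedes it below -/
import Mathlib

section
/- In an abstract model of the WTS deciding phase, any two committed proposals are comparable: if proposal sets S₁ and S₂ (elements of a join-semilattice of sets) are each committed, meaning each is acknowledged by a quorum of at least ⌊(n+f)/2⌋+1 acceptors, and each correct acceptor only acknowledges a set S when its current accepted set is a subset of S and then updates its accepted set to S (accepted sets are monotonically nondecreasing over time), then S₁ ⊆ S₂ or S₂ ⊆ S₁. -/
/-- Abstract WTS deciding phase: any two committed proposals are comparable.
Each correct acceptor `a ∈ C` has a monotone (nondecreasing) sequence of accepted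
sets `A a : ℕ → Set V`; it acks `S` at time `t` iff its accepted set at `t` equals
`S`. A set is committed when acked by at least `⌊(n−f)/2⌋+1` correct acceptors. -/
theorem committed_proposals_comparable {α V : Type*} [DecidableEq α] (n f : ℕ)
    (hn : n ≥ 3 * f + 1) (C : Finset α) (hC : C.card = n - f)
    (A : α → ℕ → Set V)
    (hmono : ∀ a ∈ C, ∀ s t : ℕ, s ≤ t → A a s ⊆ A a t)
    (S₁ S₂ : Set V)
    (h₁ : ∃ Q₁ : Finset α, Q₁ ⊆ C ∧ Q₁.card ≥ (n - f) / 2 + 1 ∧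
      ∀ a ∈ Q₁, ∃ t : ℕ, A a t = S₁)
    (h₂ : ∃ Q₂ : Finset α, Q₂ ⊆ C ∧ Q₂.card ≥ (n - f) / 2 + 1 ∧
      ∀ a ∈ Q₂, ∃ t : ℕ, A a t = S₂) :
    S₁ ⊆ S₂ ∨ S₂ ⊆ S₁ := by
  obtain ⟨Q₁, hQ₁C, hQ₁card, hQ₁ack⟩ := h₁
  obtain ⟨Q₂, hQ₂C, hQ₂card, hQ₂ack⟩ := h₂
  have hinter : (Q₁ ∩ Q₂).Nonempty := by
    rw [← Finset.card_pos]
    have hunion : (Q₁ ∪ Q₂).card ≤ n - f := hC ▸ Finset.card_le_card (Finset.union_subset hQ₁C hQ₂C)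
    have := Finset.card_union_add_card_inter Q₁ Q₂
    have h2 : (n - f) / 2 + 1 + ((n - f) / 2 + 1) ≤ Q₁.card + Q₂.card := Nat.add_le_add hQ₁card hQ₂card
    omega
  obtain ⟨a, ha⟩ := hinter
  have haC : a ∈ C := hQ₁C (Finset.mem_inter.mp ha).1
  obtain ⟨t₁, ht₁⟩ := hQ₁ack a (Finset.mem_inter.mp ha).1
  obtain ⟨t₂, ht₂⟩ := hQ₂ack a (Finset.mem_inter.mp ha).2
  rcases le_total t₁ t₂ with h | h
  · left; rw [← ht₁, ← ht₂]; exact hmono a haC t₁ t₂ h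
  · right; rw [← ht₁, ← ht₂]; exact hmono a haC t₂ t₁ h
end

section
/- If a value v is committed at time t (i.e., at least ⌊(n−f)/2⌋+1 correct acceptors have v in their accepted set from time t on), then any proposal set S committed after time t contains v. -/
/-- If a value `v` is committed at time `t` (at least `⌊(n−f)/2⌋+1` correct
acceptors have `v` in their accepted set at `t`, and accepted sets only grow),
then any proposal `S` committed after `t` contains `v`. -/
theorem committed_value_in_later_proposals {α V : Type*} [DecidableEq α] (n f : ℕ)
    (hn : n ≥ 3 * f + 1) (C : Finset α) (hC : C.card = n - f)
    (A : α → ℕ → Set V)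
    (hmono : ∀ a ∈ C, ∀ s t : ℕ, s ≤ t → A a s ⊆ A a t)
    (v : V) (t : ℕ)
    (hv : ∃ Q₁ : Finset α, Q₁ ⊆ C ∧ Q₁.card ≥ (n - f) / 2 + 1 ∧
      ∀ a ∈ Q₁, v ∈ A a t)
    (S : Set V)
    (hS : ∃ Q₂ : Finset α, Q₂ ⊆ C ∧ Q₂.card ≥ (n - f) / 2 + 1 ∧
      ∀ a ∈ Q₂, ∃ t' : ℕ, t ≤ t' ∧ A a t' ⊆ S) :
    v ∈ S := by
  obtain ⟨Q₁, hQ₁C, hQ₁card, hQ₁v⟩ := hv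
  obtain ⟨Q₂, hQ₂C, hQ₂card, hQ₂S⟩ := hS
  have hinter : (Q₁ ∩ Q₂).Nonempty := by
    rw [← Finset.card_pos]
    have hunion : (Q₁ ∪ Q₂).card ≤ n - f := by
      rw [← hC]; exact Finset.card_le_card (Finset.union_subset hQ₁C hQ₂C)
    have := Finset.card_union_add_card_inter Q₁ Q₂
    omega
  obtain ⟨a, ha⟩ := hinter
  have ha1 := Finset.mem_inter.mp ha
  obtain ⟨t', ht', hsub⟩ := hQ₂S a ha1.2
  exact hsub (hmono a (hQ₁C ha1.1) t t' ht' (hQ₁v a ha1.1))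
end

section
/- At most one value per Byzantine signer can become safe: if a value v is 'safe' when acknowledged without conflict by a quorum of ⌊(n+f)/2⌋+1 acceptors, any two quorums intersect in a correct acceptor, and a correct acceptor never acknowledges without conflict two distinct values from the same signer (once it has seen one value from a signer, it reports any distinct value from that signer as a conflict), then for each signer at most one value is safe. -/
/-- At most one value per signer can become safe: if each correct acceptor never
acknowledges without conflict two distinct values from the same signer, and a
value is safe when acknowledged by a quorum of `⌊(n+f)/2⌋+1` acceptors, then no
two distinct values with the same signer are both safe. -/
theorem at_most_one_safe_value_per_signer {α Val ι : Type*} [DecidableEq α]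
    (n f : ℕ) (hn : n ≥ 3 * f + 1)
    (P C : Finset α) (hP : P.card = n) (hC : C ⊆ P) (hCcard : C.card = n - f)
    (ok : α → Val → Prop) (signer : Val → ι)
    (hcorrect : ∀ a ∈ C, ∀ v w : Val, v ≠ w → signer v = signer w →
      ¬ (ok a v ∧ ok a w)) :
    ∀ v w : Val, v ≠ w → signer v = signer w →
      ¬ ((∃ Q₁ : Finset α, Q₁ ⊆ P ∧ Q₁.card ≥ (n + f) / 2 + 1 ∧ ∀ a ∈ Q₁, ok a v) ∧
         (∃ Q₂ : Finset α, Q₂ ⊆ P ∧ Q₂.card ≥ (n + f) / 2 + 1 ∧ ∀ a ∈ Q₂, ok a w)) := by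
  rintro v w hvw hsig ⟨⟨Q₁, hQ₁P, hQ₁c, hQ₁ok⟩, ⟨Q₂, hQ₂P, hQ₂c, hQ₂ok⟩⟩
  -- the intersection has at least f+1 elements
  have hunion : (Q₁ ∪ Q₂).card ≤ n := hP ▸ Finset.card_le_card (Finset.union_subset hQ₁P hQ₂P)
  have hint : f + 1 ≤ (Q₁ ∩ Q₂).card := by
    have := Finset.card_union_add_card_inter Q₁ Q₂
    omega
  -- so it contains a correct acceptor
  have hPC : (P \ C).card = f := by
    rw [Finset.card_sdiff_of_subset hC]; omega
  have : ¬ (Q₁ ∩ Q₂ ⊆ P \ C) := by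
    intro hsub
    have := Finset.card_le_card hsub
    omega
  obtain ⟨a, haQ, haPC⟩ := Finset.not_subset.mp this
  have haQ₁ : a ∈ Q₁ := (Finset.mem_inter.mp haQ).1
  have haQ₂ : a ∈ Q₂ := (Finset.mem_inter.mp haQ).2
  have haC : a ∈ C := by
    by_contra h
    exact haPC (Finset.mem_sdiff.mpr ⟨hQ₁P haQ₁, h⟩)
  exact hcorrect a haC v w hvw hsig ⟨hQ₁ok a haQ₁, hQ₂ok a haQ₂⟩
end

section
/- Local stability plus quorum intersection yields a global chain: if each correct acceptor's accepted sets over time form a chain under ⊆ (each new accepted set contains the previous one), and every decided set is acknowledged (equal to the accepted set at ack time) by at least ⌊(n−f)/2⌋+1 correct acceptors out of n−f, with n ≥ 3f+1, then the collection of all decided sets is totally ordered by ⊆. -/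
/-- Local stability plus quorum intersection yields a global chain: if each
correct acceptor's accepted sets over time form a chain under `⊆`, and every
decided set is acked by at least `⌊(n−f)/2⌋+1` of the `n − f` correct acceptors,
with `n ≥ 3f+1`, then any two decided sets are comparable. -/
theorem decided_sets_totally_ordered {α V : Type*} [DecidableEq α] (n f : ℕ)
    (hn : n ≥ 3 * f + 1) (C : Finset α) (hC : C.card = n - f)
    (A : α → ℕ → Set V)
    (hmono : ∀ a ∈ C, ∀ s t : ℕ, s ≤ t → A a s ⊆ A a t)
    (D₁ D₂ : Set V)
    (h₁ : ∃ Q : Finset α, Q ⊆ C ∧ Q.card ≥ (n - f) / 2 + 1 ∧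
      ∀ a ∈ Q, ∃ t : ℕ, A a t = D₁)
    (h₂ : ∃ Q : Finset α, Q ⊆ C ∧ Q.card ≥ (n - f) / 2 + 1 ∧
      ∀ a ∈ Q, ∃ t : ℕ, A a t = D₂) :
    D₁ ⊆ D₂ ∨ D₂ ⊆ D₁ := by
  obtain ⟨Q₁, hQ₁C, hQ₁card, hQ₁⟩ := h₁
  obtain ⟨Q₂, hQ₂C, hQ₂card, hQ₂⟩ := h₂
  have hinter : (Q₁ ∩ Q₂).Nonempty := by
    rw [← Finset.card_pos]
    have h := Finset.card_union_add_card_inter Q₁ Q₂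
    have hub : (Q₁ ∪ Q₂).card ≤ C.card :=
      Finset.card_le_card (Finset.union_subset hQ₁C hQ₂C)
    omega
  obtain ⟨a, ha⟩ := hinter
  have ha₁ := Finset.mem_of_mem_inter_left ha
  have ha₂ := Finset.mem_of_mem_inter_right ha
  obtain ⟨t₁, ht₁⟩ := hQ₁ a ha₁
  obtain ⟨t₂, ht₂⟩ := hQ₂ a ha₂
  have haC := hQ₁C ha₁
  rcases le_total t₁ t₂ with h | h
  · left; rw [← ht₁, ← ht₂]; exact hmono a haC t₁ t₂ h
  · right; rw [← ht₁, ← ht₂]; exact hmono a haC t₂ t₁ h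
end
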